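/- arXiv:1109.2445 — 3 statements merged into one kernel-verified Lean document; each statement's English description precedes it below -/
import Mathlib

section
/- Assume that for every finite bipartite simple graph H, every integer M ≥ 1, every permutation voltage assignment on H and the resulting M-cover H̃ with natural projection π, the coefficientwise inequality Π(p(H̃)) ⪯ p(H)^M holds between multivariate independence polynomials. Then for every finite simple graph G with attractive interactions (J_{uv} ≥ 0 for all edges uv, h arbitrary), every integer M ≥ 1, and every M-cover G̃ of G carrying the induced interactions, one has Z(G̃) ≤ Z(G)^M. -/
open scoped Classical

/-- Multivariate independence polynomial of `G`: sum over independent sets `I`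
of `∏ v ∈ I, X v`. -/
noncomputable def indepPoly {V : Type} [Fintype V] (G : SimpleGraph V) :
    MvPolynomial V ℝ :=
  ∑ I ∈ Finset.univ.filter (fun I : Finset V => ∀ u ∈ I, ∀ v ∈ I, ¬ G.Adj u v),
    ∏ v ∈ I, MvPolynomial.X v

/-- A permutation voltage assignment on `G` with values in `S_M`:
`α u v = (α v u)⁻¹` on directed edges, and (as a normalization) `α u v = 1`
on non-adjacent pairs. -/
def IsVoltage {V : Type} (G : SimpleGraph V) (M : ℕ)
    (α : V → V → Equiv.Perm (Fin M)) : Prop :=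
  (∀ u v, G.Adj u v → α v u = (α u v)⁻¹) ∧ (∀ u v, ¬ G.Adj u v → α u v = 1)

/-- The `M`-cover of `G` determined by a voltage assignment `α`:
`(u,k)` is adjacent to `(v,l)` exactly when `u ~ v` in `G` and `l = α u v k`. -/
def cover {V : Type} (G : SimpleGraph V) (M : ℕ)
    (α : V → V → Equiv.Perm (Fin M)) : SimpleGraph (V × Fin M) :=
  SimpleGraph.fromRel (fun p q => G.Adj p.1 q.1 ∧ q.2 = α p.1 q.1 p.2)

/-- Partition function of the binary pairwise model on `G` with interactions `J, h`. -/
noncomputable def partitionZ {V : Type} [Fintype V] (G : SimpleGraph V)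
    (J : Sym2 V → ℝ) (h : V → ℝ) : ℝ :=
  ∑ s : V → Bool, Real.exp
    ((∑ e ∈ G.edgeFinset,
        J e * Sym2.lift ⟨fun u v => (if s u then (1:ℝ) else 0) * (if s v then (1:ℝ) else 0),
          fun u v => by ring⟩ e)
      + ∑ v, h v * (if s v then (1:ℝ) else 0))

/-- The subdivision graph `G'` of `G`: vertices `V ⊔ E`, with `v ∈ V` adjacent to
`e ∈ E` exactly when `v` is an endpoint of `e`. -/
def subdivision {V : Type} (G : SimpleGraph V) : SimpleGraph (V ⊕ G.edgeSet) :=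
  SimpleGraph.fromRel (fun a b =>
    ∃ (v : V) (e : G.edgeSet), a = Sum.inl v ∧ b = Sum.inr e ∧ v ∈ (e : Sym2 V))

/-!
Writing `exp (J_e σ_e) = 1 + (exp J_e - 1) σ_e`, expanding over the edges and summing over the
set of zero spins turns the partition function into an independence-polynomial evaluation on
the subdivision `G'` of `G`:
`Z(G) = (∏ v, exp h_v) · p(G')(x)` with `x_v = exp (-h_v)` and `x_e = exp J_e - 1`,
and attractiveness makes these weights nonnegative. The subdivision of an `M`-cover of `G` is an
`M`-cover of the bipartite graph `G'` with projection compatible with the weights, so the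
coefficientwise hypothesis for `G'`, evaluated at the nonnegative point `x`, gives
`Z(G̃) ≤ Z(G)^M`.
-/

open Finset

variable {V : Type}

section IndepPoly

variable {W : Type} [Fintype V] [Fintype W]

lemma rename_indepPoly {G : SimpleGraph V} {H : SimpleGraph W} (φ : G ≃g H) :
    MvPolynomial.rename φ (indepPoly G) = indepPoly H := by
  simp only [indepPoly, map_sum, map_prod, MvPolynomial.rename_X]
  refine sum_equiv φ.toEquiv.finsetCongr (fun I => ?_) (fun I _ => ?_)
  · simp only [mem_filter, mem_univ, true_and, Equiv.finsetCongr_apply, forall_mem_map]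
    exact forall₂_congr fun u _ => forall₂_congr fun v _ => not_congr φ.map_adj_iff.symm
  · simp [Equiv.finsetCongr_apply, prod_map]

end IndepPoly

lemma eval_le_eval_of_coeff_le {σ : Type*} {p q : MvPolynomial σ ℝ}
    (h : ∀ m, MvPolynomial.coeff m p ≤ MvPolynomial.coeff m q) {x : σ → ℝ} (hx : 0 ≤ x) :
    MvPolynomial.eval x p ≤ MvPolynomial.eval x q := by
  rw [← sub_nonneg, ← map_sub, MvPolynomial.eval_eq]
  refine sum_nonneg fun d _ => mul_nonneg ?_ (prod_nonneg fun i _ => pow_nonneg (hx i) _)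
  simpa [sub_nonneg] using h d

section Subdivision

variable {G : SimpleGraph V} {v w : V} {e f : G.edgeSet}

@[simp] lemma subdivision_adj_inl_inl : ¬ (subdivision G).Adj (.inl v) (.inl w) := by
  simp [subdivision]

@[simp] lemma subdivision_adj_inr_inr : ¬ (subdivision G).Adj (.inr e) (.inr f) := by
  simp [subdivision]

@[simp] lemma subdivision_adj_inl_inr :
    (subdivision G).Adj (.inl v) (.inr e) ↔ v ∈ (e : Sym2 V) := by
  simp [subdivision]

@[simp] lemma subdivision_adj_inr_inl :
    (subdivision G).Adj (.inr e) (.inl v) ↔ v ∈ (e : Sym2 V) := by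
  rw [SimpleGraph.adj_comm, subdivision_adj_inl_inr]

lemma subdivision_colorable_two (G : SimpleGraph V) : (subdivision G).Colorable 2 :=
  ⟨⟨Sum.elim (fun _ => 0) (fun _ => 1), by rintro (v | e) (w | f) <;> simp⟩⟩

lemma subdivision_indep_iff {I : Finset (V ⊕ G.edgeSet)} :
    (∀ a ∈ I, ∀ b ∈ I, ¬ (subdivision G).Adj a b) ↔
      ∀ e ∈ I.toRight, ∀ v ∈ (e : Sym2 V), v ∉ I.toLeft := by
  simp only [Sum.forall, mem_toLeft, mem_toRight]
  aesop

variable [Fintype V]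

lemma eval_indepPoly_subdivision (G : SimpleGraph V) (x : V → ℝ) (y : G.edgeSet → ℝ) :
    MvPolynomial.eval (Sum.elim x y) (indepPoly (subdivision G)) =
      ∑ S : Finset V, (∏ v ∈ S, x v) *
        ∏ e ∈ univ.filter (fun e : G.edgeSet => ∀ v ∈ e.1, v ∉ S), (1 + y e) := by
  simp only [indepPoly, map_sum, map_prod, MvPolynomial.eval_X, prod_one_add, mul_sum]
  rw [← sum_finset_product (univ.filter fun p : Finset V × Finset G.edgeSet =>
      ∀ e ∈ p.2, ∀ v ∈ (e : Sym2 V), v ∉ p.1) _ _ (fun p => by simp [subset_iff])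
    (f := fun p => (∏ v ∈ p.1, x v) * ∏ e ∈ p.2, y e)]
  refine sum_equiv Finset.sumEquiv.toEquiv (fun I => ?_) (fun I _ => ?_)
  · simp only [mem_filter, mem_univ, true_and]
    exact subdivision_indep_iff
  · rw [← toLeft_disjSum_toRight (u := I), prod_disjSum]
    simp

end Subdivision

lemma lift_indicator_mul_eq_ite (s : V → Bool) (e : Sym2 V) :
    Sym2.lift ⟨fun u v => (if s u then (1:ℝ) else 0) * (if s v then (1:ℝ) else 0),
      fun u v => by ring⟩ e = if ∀ v ∈ e, s v = true then 1 else 0 := by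
  induction e using Sym2.ind with
  | _ u v => cases hu : s u <;> cases hv : s v <;> simp [hu, hv]

lemma partitionZ_eq_sum_finset [Fintype V] (G : SimpleGraph V) (J : Sym2 V → ℝ)
    (h : V → ℝ) :
    partitionZ G J h = (∏ v, Real.exp (h v)) *
      ∑ S : Finset V, (∏ v ∈ S, Real.exp (-h v)) *
        ∏ e ∈ univ.filter (fun e : G.edgeSet => ∀ v ∈ e.1, v ∉ S), Real.exp (J e) := by
  rw [partitionZ, mul_sum, eq_comm]
  refine sum_nbij' (fun S v => decide (v ∉ S)) (fun s => univ.filter (s · = false))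
    (by simp) (by simp) (fun S _ => by ext; simp) (fun s _ => by ext; simp) (fun S _ => ?_)
  rw [Real.exp_add, Real.exp_sum, Real.exp_sum]
  simp only [lift_indicator_mul_eq_ite]
  simp only [decide_eq_true_eq]
  have edges : ∏ e ∈ univ.filter (fun e : G.edgeSet => ∀ v ∈ e.1, v ∉ S),
      Real.exp (J e) =
        ∏ e ∈ G.edgeFinset, Real.exp (J e * if ∀ v ∈ e, v ∉ S then 1 else 0) := by
    rw [prod_filter, prod_subtype G.edgeFinset (fun _ => SimpleGraph.mem_edgeFinset)]
    refine prod_congr rfl fun e _ => ?_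
    split_ifs <;> simp_all
  have vertices : (∏ v ∈ S, Real.exp (-h v)) * ∏ v, Real.exp (h v) =
      ∏ v, Real.exp (h v * if v ∉ S then 1 else 0) := by
    rw [← univ_inter S, ← prod_ite_mem, ← prod_mul_distrib]
    refine prod_congr rfl fun v _ => ?_
    by_cases hv : v ∈ S <;> simp [hv, ← Real.exp_add]
  rw [edges, ← vertices]
  ring

lemma partitionZ_eq_mul_eval_indepPoly_subdivision [Fintype V] (G : SimpleGraph V)
    (J : Sym2 V → ℝ) (h : V → ℝ) :
    partitionZ G J h = (∏ v, Real.exp (h v)) * MvPolynomial.eval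
      (Sum.elim (fun v => Real.exp (-h v)) (fun e : G.edgeSet => Real.exp (J e) - 1))
      (indepPoly (subdivision G)) := by
  simp [partitionZ_eq_sum_finset, eval_indepPoly_subdivision]

lemma cover_adj {G : SimpleGraph V} {M : ℕ} {α : V → V → Equiv.Perm (Fin M)}
    (hα : IsVoltage G M α) {p q : V × Fin M} :
    (cover G M α).Adj p q ↔ G.Adj p.1 q.1 ∧ q.2 = α p.1 q.1 p.2 := by
  refine ⟨?_, fun h => ⟨fun hpq => h.1.ne (congrArg Prod.fst hpq), .inl h⟩⟩
  rintro ⟨-, h | ⟨hadj, hp⟩⟩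
  · exact h
  · refine ⟨hadj.symm, ?_⟩
    rw [hp, hα.1 _ _ hadj.symm]
    simp

section CoverOfSubdivision

variable (G : SimpleGraph V) {M : ℕ} (α : V → V → Equiv.Perm (Fin M))

lemma quot_out_eq_or (a b : V) :
    Quot.out s(a, b) = (a, b) ∨ Quot.out s(a, b) = (b, a) :=
  Sym2.mk_eq_mk_iff.1 (Quot.out_eq s(a, b))

lemma adj_quot_out (e : G.edgeSet) : G.Adj (Quot.out e.1).1 (Quot.out e.1).2 := by
  have he := e.2
  rwa [← Quot.out_eq e.1] at he

/-- The lift of `e` to the cover through `(u, k)`, where `(u, w) := Quot.out e` orients `e`. -/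
noncomputable def coverEdge (e : G.edgeSet) (k : Fin M) : Sym2 (V × Fin M) :=
  s(((Quot.out e.1).1, k), ((Quot.out e.1).2, α (Quot.out e.1).1 (Quot.out e.1).2 k))

/-- The edge of `G'` from `e` to its endpoint `v` carries `α u v`, where `u` is the tail of `e`;
since `α u u = 1`, the lift of `e` through `(u, k)` in the cover of `G'` is `coverEdge G α e k`. -/
noncomputable def subdivisionVoltage :
    V ⊕ G.edgeSet → V ⊕ G.edgeSet → Equiv.Perm (Fin M)
  | .inr e, .inl v => if v ∈ (e : Sym2 V) then α (Quot.out e.1).1 v else 1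
  | .inl v, .inr e => (if v ∈ (e : Sym2 V) then α (Quot.out e.1).1 v else 1)⁻¹
  | _, _ => 1

lemma isVoltage_subdivisionVoltage :
    IsVoltage (subdivision G) M (subdivisionVoltage G α) := by
  constructor <;> rintro (v | e) (w | f) hadj <;> simp_all [subdivisionVoltage]

variable {G α}

lemma map_fst_coverEdge (e : G.edgeSet) (k : Fin M) :
    Sym2.map Prod.fst (coverEdge G α e k) = e := by
  rw [coverEdge, Sym2.map_mk]
  exact Quot.out_eq e.1

lemma mem_coverEdge (hα : IsVoltage G M α) {e : G.edgeSet} {k : Fin M} {v : V} {l : Fin M} :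
    (v, l) ∈ coverEdge G α e k ↔ v ∈ (e : Sym2 V) ∧ l = α (Quot.out e.1).1 v k := by
  have hne := (adj_quot_out G e).ne
  have he : (e : Sym2 V) = s((Quot.out e.1).1, (Quot.out e.1).2) := (Quot.out_eq e.1).symm
  rw [coverEdge]
  generalize Quot.out e.1 = p at he hne
  have hloop := hα.2 _ _ (G.irrefl (v := p.1))
  rw [he, Sym2.mem_iff, Sym2.mem_iff]
  constructor
  · rintro (h | h) <;> obtain ⟨rfl, rfl⟩ := Prod.mk.inj h <;> simp [hloop]
  · rintro ⟨rfl | rfl, rfl⟩ <;> simp [hloop]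

lemma coverEdge_mem_edgeSet (hα : IsVoltage G M α) (e : G.edgeSet) (k : Fin M) :
    coverEdge G α e k ∈ (cover G M α).edgeSet :=
  (cover_adj hα).2 ⟨adj_quot_out G e, rfl⟩

lemma coverEdge_bijective (hα : IsVoltage G M α) :
    Function.Bijective fun p : G.edgeSet × Fin M =>
      (⟨coverEdge G α p.1 p.2, coverEdge_mem_edgeSet hα p.1 p.2⟩ :
        (cover G M α).edgeSet) := by
  constructor
  · rintro ⟨e, k⟩ ⟨e', k'⟩ h
    have h' : coverEdge G α e k = coverEdge G α e' k' := congrArg Subtype.val h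
    obtain rfl : e = e' := Subtype.ext <| by
      rw [← map_fst_coverEdge e k, h', map_fst_coverEdge]
    have hself : ((Quot.out e.1).1, k) ∈ coverEdge G α e k := Sym2.mem_mk_left _ _
    rw [h'] at hself
    have hmem := (mem_coverEdge hα).1 hself
    rw [hα.2 _ _ (G.irrefl (v := (Quot.out e.1).1))] at hmem
    exact Prod.ext rfl hmem.2
  · rintro ⟨c, hc⟩
    induction c using Sym2.ind with | _ p q => ?_
    obtain ⟨a, k⟩ := p
    obtain ⟨b, l⟩ := q
    obtain ⟨hadj, rfl⟩ : G.Adj a b ∧ l = α a b k := (cover_adj hα).1 hc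
    rcases quot_out_eq_or a b with hout | hout
    · exact ⟨(⟨s(a, b), hadj⟩, k), Subtype.ext (by simp [coverEdge, hout])⟩
    · refine ⟨(⟨s(a, b), hadj⟩, α a b k), Subtype.ext ?_⟩
      simp [coverEdge, hout, hα.1 _ _ hadj, Sym2.eq_swap]

noncomputable def coverSubdivisionIso (hα : IsVoltage G M α) :
    cover (subdivision G) M (subdivisionVoltage G α) ≃g subdivision (cover G M α) where
  toEquiv := (Equiv.sumProdDistrib _ _ _).trans
    ((Equiv.refl _).sumCongr (Equiv.ofBijective _ (coverEdge_bijective hα)))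
  map_rel_iff' := by
    rintro ⟨v | e, k⟩ ⟨w | f, l⟩ <;>
      simp +contextual [cover_adj (isVoltage_subdivisionVoltage G α), mem_coverEdge hα,
        subdivisionVoltage, Equiv.eq_symm_apply, eq_comm]

end CoverOfSubdivision

/-- If `Π(p(H̃)) ⪯ p(H)^M` for every finite bipartite graph `H` and
every `M`-cover `H̃`, then `Z(G̃) ≤ Z(G)^M` for every attractive model on a graph `G`
and every `M`-cover `G̃` with induced interactions. -/
theorem stmt0
    (hyp : ∀ (W : Type) [Fintype W] (H : SimpleGraph W), H.Colorable 2 →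
      ∀ M : ℕ, 1 ≤ M → ∀ β : W → W → Equiv.Perm (Fin M), IsVoltage H M β →
      ∀ m : W →₀ ℕ,
        MvPolynomial.coeff m
            (MvPolynomial.rename Prod.fst (indepPoly (cover H M β)))
          ≤ MvPolynomial.coeff m ((indepPoly H) ^ M))
    {V : Type} [Fintype V] (G : SimpleGraph V) (J : Sym2 V → ℝ) (h : V → ℝ)
    (hJ : ∀ e ∈ G.edgeSet, 0 ≤ J e)
    (M : ℕ) (hM : 1 ≤ M)
    (α : V → V → Equiv.Perm (Fin M)) (hα : IsVoltage G M α) :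
    partitionZ (cover G M α) (fun e => J (Sym2.map Prod.fst e)) (fun p => h p.1)
      ≤ (partitionZ G J h) ^ M := by
  set x : V ⊕ G.edgeSet → ℝ :=
    Sum.elim (fun v => Real.exp (-h v)) (fun e => Real.exp (J e) - 1)
  have hx : 0 ≤ x := by
    rintro (v | e)
    · exact (Real.exp_pos _).le
    · exact sub_nonneg.2 (Real.one_le_exp (hJ e e.2))
  have hcoeff := hyp _ (subdivision G) (subdivision_colorable_two G) M hM _
    (isVoltage_subdivisionVoltage G α)
  have hle := eval_le_eval_of_coeff_le hcoeff hx
  rw [MvPolynomial.eval_rename, map_pow] at hle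
  have hweights : Sum.elim (fun p => Real.exp (-h p.1))
      (fun c : (cover G M α).edgeSet => Real.exp (J (Sym2.map Prod.fst c.1)) - 1) ∘
        coverSubdivisionIso hα = x ∘ Prod.fst := by
    funext p
    rcases p with ⟨v | e, k⟩ <;> simp [x, coverSubdivisionIso, map_fst_coverEdge]
  rw [partitionZ_eq_mul_eval_indepPoly_subdivision, partitionZ_eq_mul_eval_indepPoly_subdivision,
    ← rename_indepPoly (coverSubdivisionIso hα), MvPolynomial.eval_rename, hweights, mul_pow,
    Fintype.prod_prod_type]
  simp only [prod_const, card_univ, Fintype.card_fin, prod_pow]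
  gcongr
end

section
/- Assume that for every finite bipartite simple graph H, every integer M ≥ 1, and every M-cover H̃ of H (via a permutation voltage assignment) with natural projection π, the coefficientwise inequality Π(p(H̃)) ⪯ p(H)^M holds. Then for every finite simple graph G with attractive interactions (J ≥ 0), the Bethe partition function is bounded by the true partition function: limsup_{M→∞} ( (M!)^{-|E|} · Σ_α Z(G̃_α) )^{1/M} ≤ Z(G;J,h), where the sum ranges over all permutation voltage assignments α on G with values in S_M, G̃_α is the corresponding M-cover with induced interactions, and (M!)^{-|E|} Σ_α Z(G̃_α) is the mean of Z over all M-covers. -/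
open scoped Classical

/-! With weights `w v = exp (-h v)` on vertices and `w e = exp (J e) - 1` on edges, expanding
`exp (J e s_u s_v) = 1 + (exp (J e) - 1) s_u s_v` shows `Z(G) = exp (∑ h) · p(G')(w)`, where `G'`
is the subdivision of `G`: an independent set of `G'` is a set `T` of unoccupied vertices together
with a set of edges avoiding `T`. The subdivision of an `M`-cover of `G` is an `M`-cover of the
bipartite graph `G'`, so the hypothesis, evaluated at the weights (nonnegative because `J ≥ 0`),
gives `Z(G̃) ≤ Z(G)^M` for every cover. Averaging over the at most `(M!)^|E|` voltage assignments
and taking `M`-th roots bounds the limsup by `Z(G)`. -/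

theorem Fintype.sum_boolFun_eq_sum_finset {A R : Type} [Fintype A] [AddCommMonoid R]
    (f : (A → Bool) → R) : ∑ s, f s = ∑ T : Finset A, f (fun v => v ∉ T) := by
  refine Fintype.sum_equiv (ι := A → Bool) (κ := Finset A)
    { toFun := fun s => Finset.univ.filter (fun v => s v = false)
      invFun := fun T v => v ∉ T
      left_inv := fun s => by funext v; simp
      right_inv := fun T => by ext v; simp } _ _ fun s => congrArg f ?_
  funext v
  simp

theorem Sym2.lift_indicator_mul_indicator {A : Type} (s : A → Bool) (e : Sym2 A) :
    Sym2.lift ⟨fun u v => (if s u then (1:ℝ) else 0) * (if s v then (1:ℝ) else 0),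
      fun u v => by ring⟩ e = if ∀ v ∈ e, s v then 1 else 0 := by
  induction e using Sym2.ind with
  | _ u v => by_cases hu : s u <;> simp [hu]

theorem Sym2.mk_out {A : Type} (z : Sym2 A) : s(z.out.1, z.out.2) = z :=
  z.out_eq

theorem Sym2.mem_iff_eq_out {A : Type} {z : Sym2 A} {x : A} :
    x ∈ z ↔ x = z.out.1 ∨ x = z.out.2 := by
  conv_lhs => rw [← z.mk_out]
  exact Sym2.mem_iff

theorem MvPolynomial.eval_le_eval_of_coeff_le {σ : Type*} {p q : MvPolynomial σ ℝ}
    (hpq : ∀ m, coeff m p ≤ coeff m q) {w : σ → ℝ} (hw : ∀ i, 0 ≤ w i) :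
    eval w p ≤ eval w q := by
  classical
  rw [eval_eq, eval_eq, Finset.sum_subset (p.support.subset_union_left (s₂ := q.support)),
    Finset.sum_subset (p.support.subset_union_right (s₂ := q.support))]
  · exact Finset.sum_le_sum fun m _ =>
      mul_le_mul_of_nonneg_right (hpq m) (Finset.prod_nonneg fun i _ => pow_nonneg (hw i) _)
  all_goals
    intro m _ hm
    rw [notMem_support_iff.mp hm, zero_mul]

namespace SimpleGraph

variable {A : Type}

theorem eval_indepPoly [Fintype A] (K : SimpleGraph A) (w : A → ℝ) :
    MvPolynomial.eval w (indepPoly K) =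
      ∑ I ∈ Finset.univ.filter (fun I : Finset A => ∀ u ∈ I, ∀ v ∈ I, ¬ K.Adj u v),
        ∏ v ∈ I, w v := by
  simp [indepPoly]

theorem rename_indepPoly_of_iso [Fintype A] {B : Type} [Fintype B] {K : SimpleGraph A}
    {L : SimpleGraph B} (f : K ≃g L) : MvPolynomial.rename f (indepPoly K) = indepPoly L := by
  simp only [indepPoly, map_sum, map_prod, MvPolynomial.rename_X]
  refine Finset.sum_equiv f.toEquiv.finsetCongr (fun I => ?_) (fun I _ => ?_)
  · simp [Equiv.finsetCongr_apply, Iso.map_adj_iff, -Finset.mem_map_equiv]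
  · simp [Equiv.finsetCongr_apply]

section Subdivision

variable (K : SimpleGraph A)

@[simp]
theorem subdivision_adj_inl_inr {v : A} {e : K.edgeSet} :
    (subdivision K).Adj (Sum.inl v) (Sum.inr e) ↔ v ∈ (e : Sym2 A) := by
  simp [subdivision]

@[simp]
theorem subdivision_adj_inr_inl {v : A} {e : K.edgeSet} :
    (subdivision K).Adj (Sum.inr e) (Sum.inl v) ↔ v ∈ (e : Sym2 A) := by
  simp [subdivision]

@[simp]
theorem subdivision_not_adj_inl_inl {u v : A} :
    ¬ (subdivision K).Adj (Sum.inl u) (Sum.inl v) := by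
  simp [subdivision]

@[simp]
theorem subdivision_not_adj_inr_inr {d e : K.edgeSet} :
    ¬ (subdivision K).Adj (Sum.inr d) (Sum.inr e) := by
  simp [subdivision]

theorem subdivision_colorable : (subdivision K).Colorable 2 :=
  ⟨Coloring.mk (Sum.elim (fun _ => 0) (fun _ => 1)) (by rintro (u | e) (v | d) <;> simp)⟩

variable [Fintype A]

theorem eval_indepPoly_subdivision (w : A ⊕ K.edgeSet → ℝ) :
    MvPolynomial.eval w (indepPoly (subdivision K)) =
      ∑ T : Finset A, (∏ v ∈ T, w (Sum.inl v)) *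
        ∏ e ∈ Finset.univ.filter (fun e : K.edgeSet => ∀ v ∈ (e : Sym2 A), v ∉ T),
          (1 + w (Sum.inr e)) := by
  rw [eval_indepPoly]
  simp_rw [Finset.prod_one_add, Finset.mul_sum]
  rw [Finset.sum_sigma']
  refine Finset.sum_nbij' (fun I => ⟨I.toLeft, I.toRight⟩) (fun x => x.1.disjSum x.2)
    ?_ ?_ ?_ ?_ fun I _ => Finset.prod_sum_eq_prod_toLeft_mul_prod_toRight I w
  all_goals simp [Finset.subset_iff, Finset.toLeft_disjSum_toRight]
  all_goals grind

theorem partitionZ_eq_exp_mul_eval_indepPoly_subdivision (J : Sym2 A → ℝ) (h : A → ℝ) :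
    partitionZ K J h = Real.exp (∑ v, h v) * MvPolynomial.eval
      (Sum.elim (fun v => Real.exp (-h v)) (fun e : K.edgeSet => Real.exp (J e) - 1))
      (indepPoly (subdivision K)) := by
  rw [eval_indepPoly_subdivision, Finset.mul_sum, partitionZ, Fintype.sum_boolFun_eq_sum_finset]
  refine Finset.sum_congr rfl fun T _ => ?_
  have hedges : ∑ e ∈ K.edgeFinset, J e * (if ∀ v ∈ e, v ∉ T then 1 else 0) =
      ∑ e ∈ Finset.univ.filter (fun e : K.edgeSet => ∀ v ∈ (e : Sym2 A), v ∉ T), J e := by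
    calc _ = ∑ e : K.edgeSet, J e * (if ∀ v ∈ (e : Sym2 A), v ∉ T then 1 else 0) :=
          Finset.sum_subtype _ (fun e => mem_edgeFinset) _
      _ = _ := by simp [Finset.sum_filter]
  have hfield : ∑ v, h v * (if v ∉ T then 1 else 0) = ∑ v, h v + ∑ v ∈ T, -h v := by
    simp only [mul_ite, mul_one, mul_zero, ← Finset.sum_filter, Finset.sum_neg_distrib]
    rw [← Finset.sum_filter_add_sum_filter_not Finset.univ (· ∉ T) h]
    simp
  simp only [Sym2.lift_indicator_mul_indicator]
  simp only [decide_eq_true_eq]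
  rw [hedges, hfield]
  simp only [Real.exp_add, Real.exp_sum, Sum.elim_inl, Sum.elim_inr, add_sub_cancel]
  ring

end Subdivision

section Cover

variable {V : Type} {G : SimpleGraph V} {M : ℕ} {α : V → V → Equiv.Perm (Fin M)}

theorem cover_adj (hα : IsVoltage G M α) {x y : V × Fin M} :
    (cover G M α).Adj x y ↔ G.Adj x.1 y.1 ∧ y.2 = α x.1 y.1 x.2 := by
  refine ⟨?_, fun hxy => ⟨fun h => hxy.1.ne (congrArg Prod.fst h), Or.inl hxy⟩⟩
  rintro ⟨-, hxy | ⟨hyx, hx⟩⟩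
  · exact hxy
  · exact ⟨hyx.symm, by simp [hx, hα.1 _ _ hyx]⟩

theorem adj_out_fst_out_snd (e : G.edgeSet) : G.Adj (e : Sym2 V).out.1 (e : Sym2 V).out.2 := by
  rw [← mem_edgeSet, Sym2.mk_out]
  exact e.2

variable (α) in
noncomputable def coverEdge (hα : IsVoltage G M α) (e : G.edgeSet) (k : Fin M) :
    (cover G M α).edgeSet :=
  ⟨s(((e : Sym2 V).out.1, k), ((e : Sym2 V).out.2, α (e : Sym2 V).out.1 (e : Sym2 V).out.2 k)),
    (cover_adj hα).2 ⟨adj_out_fst_out_snd e, rfl⟩⟩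

theorem map_fst_coverEdge (hα : IsVoltage G M α) (e : G.edgeSet) (k : Fin M) :
    Sym2.map Prod.fst (coverEdge α hα e k : Sym2 (V × Fin M)) = e :=
  Sym2.mk_out _

theorem coverEdge_bijective (hα : IsVoltage G M α) :
    Function.Bijective (fun p : G.edgeSet × Fin M => coverEdge α hα p.1 p.2) := by
  refine ⟨fun ⟨e, k⟩ ⟨e', k'⟩ hee' => ?_, fun d => ?_⟩
  · have he : e = e' := Subtype.ext <| by
      rw [← map_fst_coverEdge hα e k, ← map_fst_coverEdge hα e' k']
      exact congrArg (Sym2.map Prod.fst ∘ Subtype.val) hee'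
    subst he
    rcases Sym2.eq_iff.1 (congrArg Subtype.val hee') with ⟨h1, -⟩ | ⟨h1, -⟩
    · exact Prod.ext rfl (Prod.ext_iff.1 h1).2
    · exact absurd (congrArg Prod.fst h1) (adj_out_fst_out_snd e).ne
  · obtain ⟨z, hz⟩ := d
    induction z using Sym2.ind with
    | _ x y =>
      obtain ⟨hxy, hy⟩ : G.Adj x.1 y.1 ∧ y.2 = α x.1 y.1 x.2 := (cover_adj hα).1 hz
      have hx : α y.1 x.1 y.2 = x.2 := by simp [hα.1 _ _ hxy, hy]
      rcases Sym2.eq_iff.1 (Sym2.mk_out s(x.1, y.1)) with ⟨h1, h2⟩ | ⟨h1, h2⟩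
      · refine ⟨(⟨s(x.1, y.1), hxy⟩, x.2), Subtype.ext ?_⟩
        simp only [coverEdge, h1, h2, ← hy]
      · refine ⟨(⟨s(x.1, y.1), hxy⟩, y.2), Subtype.ext ?_⟩
        simp only [coverEdge, h1, h2, hx, Sym2.eq_swap]

variable (α) in
/-- Its `M`-cover is the subdivision of `cover G M α` (`coverSubdivisionIso`): the voltage
`α a b` of an edge `e` oriented as `(a, b) = e.out` is carried by the half-edge from `e` to `b`. -/
noncomputable def subdivisionVoltage :
    V ⊕ G.edgeSet → V ⊕ G.edgeSet → Equiv.Perm (Fin M)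
  | Sum.inl v, Sum.inr e =>
      if v = (e : Sym2 V).out.2 then (α (e : Sym2 V).out.1 (e : Sym2 V).out.2)⁻¹ else 1
  | Sum.inr e, Sum.inl v =>
      if v = (e : Sym2 V).out.2 then α (e : Sym2 V).out.1 (e : Sym2 V).out.2 else 1
  | _, _ => 1

theorem isVoltage_subdivisionVoltage : IsVoltage (subdivision G) M (subdivisionVoltage α) := by
  constructor
  · rintro (u | d) (v | e) - <;> simp only [subdivisionVoltage] <;> try split_ifs
    all_goals simp
  · rintro (u | d) (v | e) huv <;> simp only [subdivisionVoltage] <;> simp at huv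
    all_goals
      rw [if_neg]
      rintro rfl
      exact huv (Sym2.out_snd_mem _)

theorem subdivision_cover_adj_inl_coverEdge (hα : IsVoltage G M α) {v : V} {j k : Fin M}
    {e : G.edgeSet} :
    (subdivision (cover G M α)).Adj (Sum.inl (v, j)) (Sum.inr (coverEdge α hα e k)) ↔
      (cover (subdivision G) M (subdivisionVoltage α)).Adj (Sum.inl v, j) (Sum.inr e, k) := by
  rw [subdivision_adj_inl_inr, cover_adj isVoltage_subdivisionVoltage]
  simp only [subdivision_adj_inl_inr, subdivisionVoltage, coverEdge, Sym2.mem_iff,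
    Sym2.mem_iff_eq_out (z := (e : Sym2 V))]
  have hab := adj_out_fst_out_snd e
  generalize (e : Sym2 V).out.1 = a, (e : Sym2 V).out.2 = b at *
  by_cases hvb : v = b
  · subst hvb
    simp [hab.ne', Equiv.eq_symm_apply, eq_comm]
  · simp [hvb, eq_comm]

variable (α) in
noncomputable def coverSubdivisionIso (hα : IsVoltage G M α) :
    cover (subdivision G) M (subdivisionVoltage α) ≃g subdivision (cover G M α) where
  toEquiv := (Equiv.sumProdDistrib _ _ _).trans
    ((Equiv.refl _).sumCongr (Equiv.ofBijective _ (coverEdge_bijective hα)))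
  map_rel_iff' {x y} := by
    rcases x with ⟨v | d, j⟩ <;> rcases y with ⟨u | e, k⟩
    · simp [cover_adj isVoltage_subdivisionVoltage]
    · exact subdivision_cover_adj_inl_coverEdge hα
    · rw [adj_comm, adj_comm (cover _ _ _)]
      exact subdivision_cover_adj_inl_coverEdge hα
    · simp [cover_adj isVoltage_subdivisionVoltage]

variable [Fintype V]

theorem partitionZ_cover_le_pow (hα : IsVoltage G M α) {J : Sym2 V → ℝ} (h : V → ℝ)
    (hJ : ∀ e ∈ G.edgeSet, 0 ≤ J e)
    (hcoeff : ∀ m, MvPolynomial.coeff m (MvPolynomial.rename Prod.fst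
        (indepPoly (cover (subdivision G) M (subdivisionVoltage α))))
      ≤ MvPolynomial.coeff m (indepPoly (subdivision G) ^ M)) :
    partitionZ (cover G M α) (fun e => J (Sym2.map Prod.fst e)) (fun p => h p.1)
      ≤ partitionZ G J h ^ M := by
  set w := Sum.elim (fun v => Real.exp (-h v)) (fun e : G.edgeSet => Real.exp (J e) - 1)
  have hw : ∀ i, 0 ≤ w i := by
    rintro (v | e)
    · exact (Real.exp_pos _).le
    · exact sub_nonneg.2 (Real.one_le_exp (hJ _ e.2))
  have hweights : Sum.elim (fun p : V × Fin M => Real.exp (-h p.1))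
      (fun d : (cover G M α).edgeSet => Real.exp (J (Sym2.map Prod.fst d.1)) - 1) ∘
        coverSubdivisionIso α hα = w ∘ Prod.fst := by
    funext x
    rcases x with ⟨v | e, k⟩ <;> simp [coverSubdivisionIso, map_fst_coverEdge, w]
  have hfield : ∑ p : V × Fin M, h p.1 = M * ∑ v, h v := by
    simp [Fintype.sum_prod_type, Finset.mul_sum]
  rw [partitionZ_eq_exp_mul_eval_indepPoly_subdivision,
    partitionZ_eq_exp_mul_eval_indepPoly_subdivision, ← rename_indepPoly_of_iso
    (coverSubdivisionIso α hα), MvPolynomial.eval_rename, hweights, ← MvPolynomial.eval_rename,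
    hfield, Real.exp_nat_mul, mul_pow, ← map_pow]
  gcongr
  exact MvPolynomial.eval_le_eval_of_coeff_le hcoeff hw

end Cover

end SimpleGraph

theorem partitionZ_nonneg {V : Type} [Fintype V] (G : SimpleGraph V) (J : Sym2 V → ℝ)
    (h : V → ℝ) : 0 ≤ partitionZ G J h :=
  Finset.sum_nonneg fun _ _ => (Real.exp_pos _).le

theorem card_isVoltage_le {V : Type} [Fintype V] (G : SimpleGraph V) (M : ℕ) :
    Fintype.card {α : V → V → Equiv.Perm (Fin M) // IsVoltage G M α}
      ≤ M.factorial ^ G.edgeFinset.card := by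
  calc _ ≤ Fintype.card (G.edgeSet → Equiv.Perm (Fin M)) :=
        Fintype.card_le_of_injective (fun α e => α.1 (e : Sym2 V).out.1 (e : Sym2 V).out.2) ?_
    _ = _ := by simp [Fintype.card_perm, SimpleGraph.edgeFinset]
  rintro ⟨α, hα⟩ ⟨β, hβ⟩ hαβ
  refine Subtype.ext (funext₂ fun u v => show α u v = β u v from ?_)
  by_cases huv : G.Adj u v
  · have hval := congrFun hαβ ⟨s(u, v), huv⟩
    rcases Sym2.eq_iff.1 (Sym2.mk_out s(u, v)) with ⟨h1, h2⟩ | ⟨h1, h2⟩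
    · simpa [h1, h2] using hval
    · simp only [h1, h2] at hval
      rw [hα.1 v u huv.symm, hβ.1 v u huv.symm, hval]
  · rw [hα.2 u v huv, hβ.2 u v huv]

theorem Real.limsup_rpow_one_div_le {a : ℕ → ℝ} {c : ℝ} (ha : ∀ n, 0 ≤ a n)
    (hc : 0 ≤ c) (hac : ∀ᶠ n in Filter.atTop, a n ≤ c ^ n) :
    Filter.limsup (fun n => a n ^ (1 / (n : ℝ))) Filter.atTop ≤ c := by
  refine Filter.limsup_le_of_le
    (Filter.isCoboundedUnder_le_of_le Filter.atTop fun n => Real.rpow_nonneg (ha n) _) ?_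
  filter_upwards [hac, Filter.eventually_ne_atTop 0] with n hn hn0
  calc a n ^ (1 / (n : ℝ))
      ≤ (c ^ n) ^ (1 / (n : ℝ)) := Real.rpow_le_rpow (ha n) hn (by positivity)
    _ = c := by rw [one_div, Real.pow_rpow_inv_natCast hc hn0]

/-- If `Π(p(H̃)) ⪯ p(H)^M` for every finite bipartite graph `H` and every
`M`-cover `H̃`, then for attractive models the Bethe partition function,
`limsup_M (mean of Z over all M-covers)^(1/M)`, is at most `Z(G;J,h)`. -/
theorem stmt1
    (hyp : ∀ (W : Type) [Fintype W] (H : SimpleGraph W), H.Colorable 2 →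
      ∀ M : ℕ, 1 ≤ M → ∀ β : W → W → Equiv.Perm (Fin M), IsVoltage H M β →
      ∀ m : W →₀ ℕ,
        MvPolynomial.coeff m
            (MvPolynomial.rename Prod.fst (indepPoly (cover H M β)))
          ≤ MvPolynomial.coeff m ((indepPoly H) ^ M))
    {V : Type} [Fintype V] (G : SimpleGraph V) (J : Sym2 V → ℝ) (h : V → ℝ)
    (hJ : ∀ e ∈ G.edgeSet, 0 ≤ J e) :
    Filter.limsup
      (fun M : ℕ =>
        ((∑ α : {α : V → V → Equiv.Perm (Fin M) // IsVoltage G M α},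
            partitionZ (cover G M α.1)
              (fun e => J (Sym2.map Prod.fst e)) (fun p => h p.1))
          / (M.factorial : ℝ) ^ G.edgeFinset.card) ^ (1 / (M : ℝ)))
      Filter.atTop
      ≤ partitionZ G J h := by
  refine Real.limsup_rpow_one_div_le (fun M => div_nonneg
    (Finset.sum_nonneg fun _ _ => partitionZ_nonneg _ _ _) (by positivity))
    (partitionZ_nonneg G J h) ?_
  filter_upwards [Filter.eventually_ge_atTop 1] with M hM
  rw [div_le_iff₀ (by positivity)]
  calc _ ≤ Finset.univ.card • partitionZ G J h ^ M :=
        Finset.sum_le_card_nsmul _ _ _ fun α _ => SimpleGraph.partitionZ_cover_le_pow α.2 h hJ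
          (hyp _ (subdivision G) (SimpleGraph.subdivision_colorable G) M hM _
            SimpleGraph.isVoltage_subdivisionVoltage)
    _ ≤ M.factorial ^ G.edgeFinset.card * partitionZ G J h ^ M := by
        rw [Finset.card_univ, nsmul_eq_mul]
        gcongr
        · exact pow_nonneg (partitionZ_nonneg G J h) M
        · exact_mod_cast card_isVoltage_le G M
    _ = _ := mul_comm _ _
end

section
/- For every finite simple graph G = (V,E) and interactions J : E → ℝ, h : V → ℝ, the partition function admits the expansion Z(G;J,h) = (∏_{v∈V} e^{h_v}) · Σ_{(S,U)} ∏_{uv∈S} A_{uv} ∏_{v∈U} B_v, where A_{uv} := e^{J_{uv}} − 1, B_v := e^{−h_v}, and the sum ranges over all pairs (S,U) with S ⊆ E, U ⊆ V such that no vertex of U is an endpoint of any edge of S. -/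
open scoped Classical

open Finset

/-!
Read each spin configuration through its set `U` of down spins. The Boltzmann weight then
factors as `(∏ᵥ e^{h_v}) · ∏_{v ∈ U} e^{-h_v} · ∏ₑ (1 + A_e [e ∩ U = ∅])`, and expanding the
edge product over subsets `S ⊆ E` and exchanging the sums over `U` and `S` leaves exactly the
pairs `(S, U)` in which no vertex of `U` is an endpoint of an edge of `S`.
-/

theorem Finset.prod_one_add_mul_ite {ι R : Type*} [CommSemiring R] (s : Finset ι) (A : ι → R)
    (p : ι → Prop) [DecidablePred p] :
    ∏ i ∈ s, (1 + A i * if p i then 1 else 0)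
      = ∑ t ∈ s.powerset, (∏ i ∈ t, A i) * if ∀ i ∈ t, p i then 1 else 0 := by
  rw [prod_one_add]
  refine sum_congr rfl fun t _ => ?_
  rw [prod_mul_distrib, prod_boole]

theorem Fintype.sum_fun_bool_eq_sum_finset {α M : Type*} [Fintype α] [DecidableEq α]
    [AddCommMonoid M] (f : (α → Bool) → M) :
    ∑ s, f s = ∑ U : Finset α, f (fun a => decide (a ∉ U)) := by
  refine Fintype.sum_bijective (fun s : α → Bool => ({a | s a = false} : Finset α))
    ⟨fun s t hst => ?_, fun U => ?_⟩ _ _ fun s => ?_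
  · funext a
    simpa using congrArg (a ∈ ·) hst
  · exact ⟨fun a => decide (a ∉ U), by ext; simp⟩
  · congr
    funext a
    cases hs : s a <;> simp [hs]

theorem Real.exp_mul_ite_one_zero_eq_one_add (a : ℝ) (p : Prop) [Decidable p] :
    Real.exp (a * if p then 1 else 0) = 1 + (Real.exp a - 1) * if p then 1 else 0 := by
  split_ifs <;> simp

theorem Real.exp_mul_ite_one_zero_eq_mul (a : ℝ) (p : Prop) [Decidable p] :
    Real.exp (a * if p then 1 else 0) = Real.exp a * if p then 1 else Real.exp (-a) := by
  split_ifs <;> simp [← Real.exp_add]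

theorem Sym2.lift_ite_mul_ite {V R : Type*} [CommSemiring R] (s : V → Bool) (e : Sym2 V) :
    Sym2.lift ⟨fun u v => (if s u then (1 : R) else 0) * (if s v then (1 : R) else 0),
      fun u v => by ring⟩ e = if ∀ v ∈ e, s v = true then 1 else 0 := by
  induction e using Sym2.ind with
  | _ u v => cases hu : s u <;> cases hv : s v <;> simp [Sym2.mem_iff, hu, hv]

section

variable {V : Type} [Fintype V]

noncomputable def boltzmannWeight (G : SimpleGraph V) (J : Sym2 V → ℝ) (h : V → ℝ)
    (s : V → Bool) : ℝ :=
  Real.exp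
    ((∑ e ∈ G.edgeFinset,
        J e * Sym2.lift ⟨fun u v => (if s u then (1:ℝ) else 0) * (if s v then (1:ℝ) else 0),
          fun u v => by ring⟩ e)
      + ∑ v, h v * (if s v then (1:ℝ) else 0))

theorem partitionZ_eq_sum_boltzmannWeight (G : SimpleGraph V) (J : Sym2 V → ℝ) (h : V → ℝ) :
    partitionZ G J h = ∑ s, boltzmannWeight G J h s := rfl

theorem boltzmannWeight_decide_notMem (G : SimpleGraph V) (J : Sym2 V → ℝ) (h : V → ℝ)
    (U : Finset V) :
    boltzmannWeight G J h (fun v => decide (v ∉ U))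
      = (∏ v, Real.exp (h v)) * (∏ v ∈ U, Real.exp (-h v)) *
        ∑ S ∈ G.edgeFinset.powerset,
          (∏ e ∈ S, (Real.exp (J e) - 1)) * if ∀ v ∈ U, ∀ e ∈ S, v ∉ e then 1 else 0 := by
  have edges : ∏ e ∈ G.edgeFinset, Real.exp (J e * if ∀ v ∈ e, v ∉ U then 1 else 0)
      = ∑ S ∈ G.edgeFinset.powerset,
          (∏ e ∈ S, (Real.exp (J e) - 1)) * if ∀ v ∈ U, ∀ e ∈ S, v ∉ e then 1 else 0 := by
    simp_rw [Real.exp_mul_ite_one_zero_eq_one_add, prod_one_add_mul_ite]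
    refine sum_congr rfl fun S _ => ?_
    congr 2
    exact propext ⟨fun hS v hv e he hve => hS e he v hve hv,
      fun hU e he v hve hv => hU v hv e he hve⟩
  have vertices : ∏ v, Real.exp (h v * if v ∉ U then 1 else 0)
      = (∏ v, Real.exp (h v)) * ∏ v ∈ U, Real.exp (-h v) := by
    simp_rw [Real.exp_mul_ite_one_zero_eq_mul, prod_mul_distrib, ite_not, prod_ite_mem, univ_inter]
  simp only [boltzmannWeight, Sym2.lift_ite_mul_ite]
  simp only [decide_eq_true_eq, Real.exp_add, Real.exp_sum, vertices, edges]
  ring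

end

/-- high-temperature expansion of the partition function:
`Z = (∏ v e^{h_v}) Σ_{(S,U) not adjacent} ∏_{uv ∈ S} A_{uv} ∏_{v ∈ U} B_v`
with `A_{uv} = e^{J_{uv}} - 1`, `B_v = e^{-h_v}`. -/
theorem stmt2 {V : Type} [Fintype V] (G : SimpleGraph V)
    (J : Sym2 V → ℝ) (h : V → ℝ) :
    partitionZ G J h
      = (∏ v, Real.exp (h v)) *
        ∑ S ∈ G.edgeFinset.powerset,
          ∑ U ∈ (Finset.univ : Finset V).powerset.filter
              (fun U => ∀ v ∈ U, ∀ e ∈ S, v ∉ e),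
            (∏ e ∈ S, (Real.exp (J e) - 1)) * ∏ v ∈ U, Real.exp (-h v) := by
  rw [partitionZ_eq_sum_boltzmannWeight, Fintype.sum_fun_bool_eq_sum_finset]
  simp_rw [boltzmannWeight_decide_notMem, mul_assoc, ← mul_sum]
  congr 1
  simp_rw [mul_sum]
  rw [sum_comm]
  refine sum_congr rfl fun S _ => ?_
  rw [powerset_univ, sum_filter]
  refine sum_congr rfl fun U _ => ?_
  split_ifs <;> ring
end
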